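/- Let Φ be a Leonard system acting on V, with nonzero ξ*_0 ∈ E*_0V. Then the linear map ∑_{r=0}^d (E_r E*_0 E_r)/tr(E_r E*_0) acts as the identity on each basis vector E_i ξ*_0; more generally, for any sequence X_0,…,X_d taken from one of the families {E_i}, {E_{d−i}}, {τ_i(A)}, {τ_{d−i}(A)}, {η_i(A)}, {η_{d−i}(A)}, the map ∑_{r=0}^d X_r E*_0 E_r / tr(E_r E*_0) sends E_i ξ*_0 to X_i ξ*_0 for 0 ≤ i ≤ d. -/

import Mathlib

open Matrix Polynomial

/-- A Leonard system in the matrix algebra `Mat_{d+1}(K)`: multiplicity-free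
elements `A`, `Astar` with orderings `E`, `Estar` of their primitive idempotents
satisfying the irreducible-tridiagonality conditions. -/
structure LeonardSystem (K : Type*) [Field K] (d : ℕ) where
  A : Matrix (Fin (d+1)) (Fin (d+1)) K
  Astar : Matrix (Fin (d+1)) (Fin (d+1)) K
  E : Fin (d+1) → Matrix (Fin (d+1)) (Fin (d+1)) K
  Estar : Fin (d+1) → Matrix (Fin (d+1)) (Fin (d+1)) K
  θ : Fin (d+1) → K
  θs : Fin (d+1) → K
  θ_inj : Function.Injective θ
  θs_inj : Function.Injective θs
  E_ne : ∀ i, E i ≠ 0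
  Es_ne : ∀ i, Estar i ≠ 0
  E_mul : ∀ i j, E i * E j = if i = j then E i else 0
  Es_mul : ∀ i j, Estar i * Estar j = if i = j then Estar i else 0
  E_sum : ∑ i, E i = 1
  Es_sum : ∑ i, Estar i = 1
  A_eq : A = ∑ i, θ i • E i
  As_eq : Astar = ∑ i, θs i • Estar i
  trid0 : ∀ i j : Fin (d+1), ((i : ℤ) - (j : ℤ)).natAbs > 1 → E i * Astar * E j = 0
  trid1 : ∀ i j : Fin (d+1), ((i : ℤ) - (j : ℤ)).natAbs = 1 → E i * Astar * E j ≠ 0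
  strid0 : ∀ i j : Fin (d+1), ((i : ℤ) - (j : ℤ)).natAbs > 1 → Estar i * A * Estar j = 0
  strid1 : ∀ i j : Fin (d+1), ((i : ℤ) - (j : ℤ)).natAbs = 1 → Estar i * A * Estar j ≠ 0

namespace LeonardSystem

variable {K : Type*} [Field K] {d : ℕ}

/-- Eigenvalues indexed by `ℕ` (junk value outside range). -/
def θN (L : LeonardSystem K d) (i : ℕ) : K := if h : i < d + 1 then L.θ ⟨i, h⟩ else 0

def θsN (L : LeonardSystem K d) (i : ℕ) : K := if h : i < d + 1 then L.θs ⟨i, h⟩ else 0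

/-- `τ_i(A) = (A-θ₀)(A-θ₁)⋯(A-θ_{i-1})`. -/
def tauA (L : LeonardSystem K d) : ℕ → Matrix (Fin (d+1)) (Fin (d+1)) K
  | 0 => 1
  | i + 1 => L.tauA i * (L.A - L.θN i • 1)

/-- `η_i(A) = (A-θ_d)(A-θ_{d-1})⋯(A-θ_{d-i+1})`. -/
def etaA (L : LeonardSystem K d) : ℕ → Matrix (Fin (d+1)) (Fin (d+1)) K
  | 0 => 1
  | i + 1 => L.etaA i * (L.A - L.θN (d - i) • 1)

/-- `τ*_i(A*)`. -/
def tausA (L : LeonardSystem K d) : ℕ → Matrix (Fin (d+1)) (Fin (d+1)) K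
  | 0 => 1
  | i + 1 => L.tausA i * (L.Astar - L.θsN i • 1)

/-- `η*_i(A*)`. -/
def etasA (L : LeonardSystem K d) : ℕ → Matrix (Fin (d+1)) (Fin (d+1)) K
  | 0 => 1
  | i + 1 => L.etasA i * (L.Astar - L.θsN (d - i) • 1)

/-- Scalar `τ_i(x)`. -/
def tauS (L : LeonardSystem K d) (i : ℕ) (x : K) : K := ∏ j ∈ Finset.range i, (x - L.θN j)

/-- Scalar `η_i(x)`. -/
def etaS (L : LeonardSystem K d) (i : ℕ) (x : K) : K := ∏ j ∈ Finset.range i, (x - L.θN (d - j))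

/-- Scalar `τ*_i(x)`. -/
def tausS (L : LeonardSystem K d) (i : ℕ) (x : K) : K := ∏ j ∈ Finset.range i, (x - L.θsN j)

/-- Scalar `η*_i(x)`. -/
def etasS (L : LeonardSystem K d) (i : ℕ) (x : K) : K := ∏ j ∈ Finset.range i, (x - L.θsN (d - j))

/-- First split sequence `φ_i`. -/
noncomputable def varphi (L : LeonardSystem K d) (i : ℕ) : K :=
  (L.θsN 0 - L.θsN i) * (L.tauA i * L.Estar 0).trace / (L.tauA (i-1) * L.Estar 0).trace

/-- Second split sequence `ϕ_i`. -/
noncomputable def phi (L : LeonardSystem K d) (i : ℕ) : K :=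
  (L.θsN 0 - L.θsN i) * (L.etaA i * L.Estar 0).trace / (L.etaA (i-1) * L.Estar 0).trace

/-- `φ₁φ₂⋯φ_r`. -/
noncomputable def varphiProd (L : LeonardSystem K d) (r : ℕ) : K :=
  ∏ j ∈ Finset.range r, L.varphi (j + 1)

/-- `ϕ₁ϕ₂⋯ϕ_r`. -/
noncomputable def phiProd (L : LeonardSystem K d) (r : ℕ) : K :=
  ∏ j ∈ Finset.range r, L.phi (j + 1)

/-- `φ_d φ_{d-1} ⋯ φ_{d-r+1}`. -/
noncomputable def varphiRevProd (L : LeonardSystem K d) (r : ℕ) : K :=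
  ∏ j ∈ Finset.range r, L.varphi (d - j)

/-- `ϕ_d ϕ_{d-1} ⋯ ϕ_{d-r+1}`. -/
noncomputable def phiRevProd (L : LeonardSystem K d) (r : ℕ) : K :=
  ∏ j ∈ Finset.range r, L.phi (d - j)

end LeonardSystem

/-!
On `E_i ξ*_0` only the term `r = i` of the sum survives, since the `E_r` are orthogonal
idempotents. Being `d + 1` nonzero orthogonal idempotents in dimension `d + 1`, the `E_r` and the
`E*_r` have rank one, so `E*_0 M E*_0 = tr(M E*_0) E*_0` for every `M`; as `E*_0 ξ*_0 = ξ*_0` this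
gives `E*_0 E_i ξ*_0 = tr(E_i E*_0) ξ*_0`, and the claim follows once `tr(E_i E*_0) ≠ 0`.
If the trace vanished, then `E*_0 E_i E*_0 = 0`, and since `E_i` has rank one, `E_i E*_0 = 0` or
`E*_0 E_i = 0`. Because `E_i A = θ_i E_i` while `A` acts irreducibly tridiagonally on
`E*_0 V, …, E*_d V`, the first propagates to `E_i E*_j = 0` for every `j` (the second likewise,
after transposing), whence `E_i = ∑_j E_i E*_j = 0`.
-/

namespace Matrix

section RankOne

variable {n R : Type*} [Fintype n] [CommSemiring R]

theorem vecMulVec_mul_mul_vecMulVec (u v : n → R) (M : Matrix n n R) :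
    vecMulVec u v * M * vecMulVec u v = (M * vecMulVec u v).trace • vecMulVec u v := by
  rw [vecMulVec_mul, vecMulVec_mul_vecMulVec, vecMulVec_smul, mul_vecMulVec, trace_vecMulVec,
    dotProduct_comm (M *ᵥ u), dotProduct_mulVec, dotProduct_comm]

theorem vecMulVec_mul_mulVec_of_mulVec_eq {u v ξ : n → R} (M : Matrix n n R)
    (hξ : vecMulVec u v *ᵥ ξ = ξ) :
    (vecMulVec u v * M) *ᵥ ξ = (M * vecMulVec u v).trace • ξ := by
  conv_lhs => rw [← hξ, mulVec_mulVec, vecMulVec_mul_mul_vecMulVec, smul_mulVec, hξ]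

theorem mul_vecMulVec_mul_eq_zero [NoZeroDivisors R] {X Y : Matrix n n R} {u v : n → R}
    (h : X * vecMulVec u v * Y = 0) :
    X * vecMulVec u v = 0 ∨ vecMulVec u v * Y = 0 := by
  rw [mul_vecMulVec, vecMulVec_mul, vecMulVec_eq_zero] at h
  rw [mul_vecMulVec, vecMulVec_mul, vecMulVec_eq_zero, vecMulVec_eq_zero]
  tauto

end RankOne

section OrthogonalIdempotents

variable {ι m n K : Type*} [Fintype ι] [DecidableEq ι] [Fintype n] [Field K]

theorem exists_eq_vecMulVec_of_rank_le_one [DecidableEq n] {M : Matrix m n K} (h : M.rank ≤ 1) :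
    ∃ (u : m → K) (v : n → K), M = vecMulVec u v := by
  obtain ⟨u, hu⟩ := finrank_le_one_iff.mp h
  have hcol : ∀ b, ∃ c : K, c • (u : m → K) = M.col b := fun b => by
    obtain ⟨c, hc⟩ := hu ⟨M *ᵥ Pi.single b 1, _, rfl⟩
    exact ⟨c, by rw [← mulVec_single_one]; exact congrArg Subtype.val hc⟩
  choose c hc using hcol
  refine ⟨u, c, ext fun a b => ?_⟩
  simpa [vecMulVec_apply, mul_comm] using (congrFun (hc b) a).symm

theorem rank_pos_of_ne_zero [DecidableEq n] {M : Matrix m n K} (hM : M ≠ 0) : 0 < M.rank := by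
  refine Nat.pos_of_ne_zero fun h => hM (ext fun a b => ?_)
  have hmem : M.col b ∈ LinearMap.range M.mulVecLin := ⟨Pi.single b 1, mulVec_single_one M b⟩
  rw [Submodule.finrank_eq_zero.mp h, Submodule.mem_bot] at hmem
  exact congrFun hmem a

theorem sum_rank_le_card_of_mul_eq_ite (E : ι → Matrix n n K)
    (hmul : ∀ i j, E i * E j = if i = j then E i else 0) :
    ∑ i, (E i).rank ≤ Fintype.card n := by
  set W : ι → Submodule K (n → K) := fun i => LinearMap.range (E i).mulVecLin
  have hproj : ∀ k j, ∀ x ∈ W j, E k *ᵥ x = if k = j then x else 0 := by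
    rintro k j _ ⟨y, rfl⟩
    change E k *ᵥ (E j *ᵥ y) = _
    rw [mulVec_mulVec, hmul]
    split_ifs with hkj
    · rw [hkj]; rfl
    · exact zero_mulVec y
  let φ := LinearMap.lsum K (fun j => W j) K fun j => (W j).subtype
  have hφ : Function.Injective φ := by
    refine (injective_iff_map_eq_zero φ).mpr fun w hw => funext fun k => Subtype.ext ?_
    have := congrArg (E k *ᵥ ·) hw
    simpa [φ, mulVec_sum, fun j => hproj k j _ (w j).2] using this
  have := LinearMap.finrank_le_finrank_of_injective hφ
  rwa [Module.finrank_pi_fintype, Module.finrank_fintype_fun_eq_card] at this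

theorem exists_eq_vecMulVec_of_mul_eq_ite [DecidableEq n] (E : ι → Matrix n n K)
    (hcard : Fintype.card n ≤ Fintype.card ι)
    (hmul : ∀ i j, E i * E j = if i = j then E i else 0) (hne : ∀ i, E i ≠ 0) (i : ι) :
    ∃ u v : n → K, E i = vecMulVec u v := by
  refine exists_eq_vecMulVec_of_rank_le_one (not_lt.mp fun hi => ?_)
  have : ∑ _j : ι, 1 < ∑ j, (E j).rank :=
    Finset.sum_lt_sum (fun j _ => rank_pos_of_ne_zero (hne j)) ⟨i, Finset.mem_univ _, hi⟩
  simp only [Finset.sum_const, Finset.card_univ, smul_eq_mul, mul_one] at this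
  have := sum_rank_le_card_of_mul_eq_ite E hmul
  omega

end OrthogonalIdempotents

section Tridiagonal

variable {n K : Type*} [Fintype n] [Field K] {d : ℕ}

structure IsIrreducibleTridiagonalOn (A : Matrix n n K) (F : Fin (d+1) → Matrix n n K) :
    Prop where
  mul_mul_eq_zero : ∀ i j : Fin (d+1), 1 < ((i : ℤ) - j).natAbs → F i * A * F j = 0
  mul_mul_ne_zero : ∀ i j : Fin (d+1), ((i : ℤ) - j).natAbs = 1 → F i * A * F j ≠ 0

namespace IsIrreducibleTridiagonalOn

variable {A : Matrix n n K} {F : Fin (d+1) → Matrix n n K}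

theorem transpose (hA : IsIrreducibleTridiagonalOn A F) :
    IsIrreducibleTridiagonalOn Aᵀ fun i => (F i)ᵀ := by
  have hmul : ∀ i j, (F i)ᵀ * Aᵀ * (F j)ᵀ = (F j * A * F i)ᵀ := fun i j => by
    rw [transpose_mul, transpose_mul, Matrix.mul_assoc]
  refine ⟨fun i j hij => ?_, fun i j hij => ?_⟩
  · rw [hmul, hA.mul_mul_eq_zero j i (by omega), transpose_zero]
  · rw [hmul, Ne, transpose_eq_zero]
    exact hA.mul_mul_ne_zero j i (by omega)

variable [DecidableEq n] {M : Matrix n n K} {c : K}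

theorem mul_succ_eq_zero (hA : IsIrreducibleTridiagonalOn A F)
    (hF : ∀ i, ∃ u v : n → K, F i = vecMulVec u v) (hF_sum : ∑ i, F i = 1)
    (hM : M * A = c • M) (i : Fin d) (hle : ∀ j ≤ i.castSucc, M * F j = 0) :
    M * F i.succ = 0 := by
  -- In `M A F_i = ∑ t, M F_t A F_i`, the terms `t ≤ i` vanish by hypothesis and `t > i + 1` by
  -- tridiagonality; the left side is `c M F_i = 0`.
  have hsingle : ∑ t, M * F t * A * F i.castSucc = M * F i.succ * A * F i.castSucc := by
    refine Finset.sum_eq_single i.succ (fun t _ ht => ?_) (by simp)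
    rcases le_or_gt t i.castSucc with hti | hti
    · rw [hle t hti, Matrix.zero_mul, Matrix.zero_mul]
    · have hfar : 1 < ((t : ℤ) - i.castSucc).natAbs := by
        have : (t : ℕ) ≠ i + 1 := fun h => ht (Fin.ext h)
        simp only [Fin.lt_def, Fin.val_castSucc] at hti ⊢
        omega
      calc M * F t * A * F i.castSucc = M * (F t * A * F i.castSucc) := by
            simp only [Matrix.mul_assoc]
        _ = 0 := by rw [hA.mul_mul_eq_zero t _ hfar, Matrix.mul_zero]
  have hzero : M * F i.succ * (A * F i.castSucc) = 0 := by
    rw [← Matrix.mul_assoc, ← hsingle, ← Finset.sum_mul, ← Finset.sum_mul, ← Finset.mul_sum,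
      hF_sum, Matrix.mul_one, hM, smul_mul_assoc, hle _ le_rfl, smul_zero]
  obtain ⟨u, v, huv⟩ := hF i.succ
  rw [huv] at hzero ⊢
  refine (mul_vecMulVec_mul_eq_zero hzero).resolve_right fun h => ?_
  refine hA.mul_mul_ne_zero i.succ i.castSucc (by simp) ?_
  rw [Matrix.mul_assoc, huv, h]

theorem eq_zero_of_mul_eq_smul (hA : IsIrreducibleTridiagonalOn A F)
    (hF : ∀ i, ∃ u v : n → K, F i = vecMulVec u v) (hF_sum : ∑ i, F i = 1)
    (hM : M * A = c • M) (hM0 : M * F 0 = 0) : M = 0 := by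
  have hle : ∀ i j, j ≤ i → M * F j = 0 := by
    refine Fin.induction (fun j hj => by rwa [Fin.le_zero_iff.mp hj]) fun i ih j hj => ?_
    rcases hj.lt_or_eq with hj | rfl
    · exact ih j (Fin.le_castSucc_iff.mpr hj)
    · exact hA.mul_succ_eq_zero hF hF_sum hM i ih
  rw [← Matrix.mul_one M, ← hF_sum, Finset.mul_sum]
  exact Finset.sum_eq_zero fun j _ => hle j j le_rfl

end IsIrreducibleTridiagonalOn

end Tridiagonal

end Matrix

namespace LeonardSystem

variable {K : Type*} [Field K] {d : ℕ} (L : LeonardSystem K d)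

theorem E_mul_A (r : Fin (d+1)) : L.E r * L.A = L.θ r • L.E r := by
  simp [L.A_eq, Finset.mul_sum, L.E_mul]

theorem A_mul_E (r : Fin (d+1)) : L.A * L.E r = L.θ r • L.E r := by
  simp [L.A_eq, Finset.sum_mul, L.E_mul]

theorem exists_E_eq_vecMulVec (i : Fin (d+1)) : ∃ u v, L.E i = vecMulVec u v :=
  exists_eq_vecMulVec_of_mul_eq_ite L.E le_rfl L.E_mul L.E_ne i

theorem exists_Estar_eq_vecMulVec (i : Fin (d+1)) : ∃ u v, L.Estar i = vecMulVec u v :=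
  exists_eq_vecMulVec_of_mul_eq_ite L.Estar le_rfl L.Es_mul L.Es_ne i

theorem isIrreducibleTridiagonalOn_A_Estar : L.A.IsIrreducibleTridiagonalOn L.Estar :=
  ⟨L.strid0, L.strid1⟩

theorem E_mul_Estar_zero_ne_zero (r : Fin (d+1)) : L.E r * L.Estar 0 ≠ 0 := fun h =>
  L.E_ne r <| L.isIrreducibleTridiagonalOn_A_Estar.eq_zero_of_mul_eq_smul
    L.exists_Estar_eq_vecMulVec L.Es_sum (L.E_mul_A r) h

theorem Estar_zero_mul_E_ne_zero (r : Fin (d+1)) : L.Estar 0 * L.E r ≠ 0 := fun h => by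
  refine L.E_ne r <| transpose_eq_zero.mp <|
    L.isIrreducibleTridiagonalOn_A_Estar.transpose.eq_zero_of_mul_eq_smul (c := L.θ r) ?_ ?_ ?_ ?_
  · intro i
    obtain ⟨u, v, huv⟩ := L.exists_Estar_eq_vecMulVec i
    exact ⟨v, u, by rw [huv, transpose_vecMulVec]⟩
  · rw [← transpose_sum, L.Es_sum, transpose_one]
  · rw [← transpose_mul, L.A_mul_E, transpose_smul]
  · rw [← transpose_mul, h, transpose_zero]

theorem trace_E_mul_Estar_zero_ne_zero (r : Fin (d+1)) : (L.E r * L.Estar 0).trace ≠ 0 := by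
  intro htr
  obtain ⟨u, v, huv⟩ := L.exists_E_eq_vecMulVec r
  obtain ⟨p, q, hpq⟩ := L.exists_Estar_eq_vecMulVec 0
  have h : L.Estar 0 * L.E r * L.Estar 0 = 0 := by
    rw [hpq, vecMulVec_mul_mul_vecMulVec, ← hpq, htr, zero_smul]
  rw [huv] at h
  rcases mul_vecMulVec_mul_eq_zero h with h | h
  · exact L.Estar_zero_mul_E_ne_zero r (huv ▸ h)
  · exact L.E_mul_Estar_zero_ne_zero r (huv ▸ h)

theorem Estar_zero_mul_mulVec {ξ : Fin (d+1) → K} (hξ : L.Estar 0 *ᵥ ξ = ξ)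
    (M : Matrix (Fin (d+1)) (Fin (d+1)) K) :
    (L.Estar 0 * M) *ᵥ ξ = (M * L.Estar 0).trace • ξ := by
  obtain ⟨u, v, huv⟩ := L.exists_Estar_eq_vecMulVec 0
  rw [huv] at hξ ⊢
  exact vecMulVec_mul_mulVec_of_mulVec_eq M hξ

theorem sum_inv_trace_smul_mul_mulVec (X : Fin (d+1) → Matrix (Fin (d+1)) (Fin (d+1)) K)
    {ξ : Fin (d+1) → K} (hξ : L.Estar 0 *ᵥ ξ = ξ) (i : Fin (d+1)) :
    (∑ r, ((L.E r * L.Estar 0).trace)⁻¹ • (X r * L.Estar 0 * L.E r)) *ᵥ (L.E i *ᵥ ξ) =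
      X i *ᵥ ξ := by
  have hsingle : ∑ r, ((L.E r * L.Estar 0).trace)⁻¹ • (X r * L.Estar 0 * L.E r * L.E i) =
      ((L.E i * L.Estar 0).trace)⁻¹ • (X i * L.Estar 0 * L.E i) := by
    refine (Finset.sum_eq_single i (fun r _ hr => ?_) (by simp)).trans ?_
    · rw [Matrix.mul_assoc, L.E_mul, if_neg hr, Matrix.mul_zero, smul_zero]
    · rw [Matrix.mul_assoc, L.E_mul, if_pos rfl]
  rw [mulVec_mulVec, Finset.sum_mul, Finset.sum_congr rfl fun r _ => smul_mul_assoc .., hsingle,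
    smul_mulVec, Matrix.mul_assoc, ← mulVec_mulVec, L.Estar_zero_mul_mulVec hξ, mulVec_smul,
    smul_smul, inv_mul_cancel₀ (L.trace_E_mul_Estar_zero_ne_zero i), one_smul]

end LeonardSystem

theorem LeonardSystem.transition_from_Eixs0_general {K : Type*} [Field K] {d : ℕ}
    (L : LeonardSystem K d) (ξs0 : Fin (d+1) → K)
    (hEs0 : (L.Estar 0).mulVec ξs0 = ξs0) :
    (∀ i : Fin (d+1),
      (∑ r : Fin (d+1), ((L.E r * L.Estar 0).trace)⁻¹ • (L.E r * L.Estar 0 * L.E r)).mulVec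
        ((L.E i).mulVec ξs0) = (L.E i).mulVec ξs0) ∧
    (∀ X : Fin (d+1) → Matrix (Fin (d+1)) (Fin (d+1)) K,
      (X = L.E ∨ X = (fun i => L.E i.rev) ∨ X = (fun (i : Fin (d+1)) => L.tauA (i : ℕ)) ∨
       X = (fun (i : Fin (d+1)) => L.tauA (d - (i : ℕ))) ∨ X = (fun (i : Fin (d+1)) => L.etaA (i : ℕ)) ∨
       X = (fun (i : Fin (d+1)) => L.etaA (d - (i : ℕ)))) →
      ∀ i : Fin (d+1),
        (∑ r : Fin (d+1), ((L.E r * L.Estar 0).trace)⁻¹ • (X r * L.Estar 0 * L.E r)).mulVec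
          ((L.E i).mulVec ξs0) = (X i).mulVec ξs0) :=
  ⟨L.sum_inv_trace_smul_mul_mulVec L.E hEs0, fun X _ => L.sum_inv_trace_smul_mul_mulVec X hEs0⟩

/-- The map `∑_r (E_r E*_0 E_r)/tr(E_r E*_0)` is the identity on each basis
vector `E_i ξ*_0`, and more generally `∑_r X_r E*_0 E_r / tr(E_r E*_0)` sends
`E_i ξ*_0` to `X_i ξ*_0` for each of the six families of `X`'s. -/
theorem LeonardSystem.transition_from_Eixs0 {K : Type*} [Field K] {d : ℕ}
    (L : LeonardSystem K d) (ξs0 : Fin (d+1) → K) (hξs0 : ξs0 ≠ 0)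
    (hEs0 : (L.Estar 0).mulVec ξs0 = ξs0) :
    (∀ i : Fin (d+1),
      (∑ r : Fin (d+1), ((L.E r * L.Estar 0).trace)⁻¹ • (L.E r * L.Estar 0 * L.E r)).mulVec
        ((L.E i).mulVec ξs0) = (L.E i).mulVec ξs0) ∧
    (∀ X : Fin (d+1) → Matrix (Fin (d+1)) (Fin (d+1)) K,
      (X = L.E ∨ X = (fun i => L.E i.rev) ∨ X = (fun (i : Fin (d+1)) => L.tauA (i : ℕ)) ∨
       X = (fun (i : Fin (d+1)) => L.tauA (d - (i : ℕ))) ∨ X = (fun (i : Fin (d+1)) => L.etaA (i : ℕ)) ∨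
       X = (fun (i : Fin (d+1)) => L.etaA (d - (i : ℕ)))) →
      ∀ i : Fin (d+1),
        (∑ r : Fin (d+1), ((L.E r * L.Estar 0).trace)⁻¹ • (X r * L.Estar 0 * L.E r)).mulVec
          ((L.E i).mulVec ξs0) = (X i).mulVec ξs0) :=
  LeonardSystem.transition_from_Eixs0_general L ξs0 hEs0
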